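/- arXiv:2506.15507 — 6 statements merged into one kernel-verified Lean document; each statement's English description precedes it below -/
import Mathlib

section
/- Consider a TCN obtained by stacking L_T temporal convolutional layers, each of kernel size P with the same temporal topology matrix R (lower-triangular Toeplitz band matrix with nonnegative coefficients r_0,…,r_{P-1} ≥ 0), where layer l has weight matrices W_p^(l) ∈ ℝ^{d×d} satisfying ‖W_p^(l)‖ ≤ w for all p < P and l ≤ L_T, and each layer uses a differentiable pointwise activation σ with |σ'| ≤ c_σ. Then for every i, j ∈ {0,…,T-1}, the spectral norm of the Jacobian block ∂h^(L_T)_{t-j}/∂h^(0)_{t-i} ∈ ℝ^{d×d} of the final output at position j with respect to the initial input at position i is at most (c_σ · w)^{L_T} · (R^{L_T})_{ij}. -/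
noncomputable section

/-- Entrywise application of a scalar activation `σ` to a Euclidean vector. -/
def entrywise {d : ℕ} (σ : ℝ → ℝ) (x : EuclideanSpace ℝ (Fin d)) :
    EuclideanSpace ℝ (Fin d) :=
  WithLp.toLp 2 (fun k => σ (x k))

/-- One temporal convolutional (TCN) layer with kernel size `P`, coefficients `r`,
weight matrices `W p`, and pointwise activation `σ`: its `j`-th output is
`σ( ∑_{p < P, j + p ≤ T - 1} r p • (W p)ᵀ (h (j + p)) )`, with `σ` applied entrywise. -/
def tcnLayer (T P d : ℕ) (σ : ℝ → ℝ) (r : ℕ → ℝ)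
    (W : ℕ → Matrix (Fin d) (Fin d) ℝ)
    (h : Fin T → EuclideanSpace ℝ (Fin d)) :
    Fin T → EuclideanSpace ℝ (Fin d) :=
  fun j => entrywise σ
    (∑ p ∈ Finset.range P,
      if hp : j.val + p < T then
        r p • (Matrix.toEuclideanCLM (𝕜 := ℝ) (W p).transpose) (h ⟨j.val + p, hp⟩)
      else 0)

/-- A stack of TCN layers sharing the temporal topology, where layer `l` (for `l < L`)
has weight matrices `W l p`. -/
def tcnStack (T P d : ℕ) (σ : ℝ → ℝ) (r : ℕ → ℝ)
    (W : ℕ → ℕ → Matrix (Fin d) (Fin d) ℝ) :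
    ℕ → (Fin T → EuclideanSpace ℝ (Fin d)) → Fin T → EuclideanSpace ℝ (Fin d)
  | 0 => fun h => h
  | l + 1 => fun h => tcnLayer T P d σ r (W l) (tcnStack T P d σ r W l h)

/-- The continuous linear inclusion of the `i`-th coordinate into a finite product. -/
def coordIncl (𝕜 : Type*) [NontriviallyNormedField 𝕜] {ι : Type*} [Fintype ι]
    [DecidableEq ι] (E : Type*) [NormedAddCommGroup E] [NormedSpace 𝕜 E] (i : ι) :
    E →L[𝕜] (ι → E) :=
  ContinuousLinearMap.pi (Pi.single i (ContinuousLinearMap.id 𝕜 E))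

-- auxiliary definitions and lemmas

abbrev piEq (d : ℕ) : EuclideanSpace ℝ (Fin d) ≃L[ℝ] (Fin d → ℝ) :=
  PiLp.continuousLinearEquiv 2 ℝ (fun _ : Fin d => ℝ)

def diagCLM {d : ℕ} (a : Fin d → ℝ) :
    EuclideanSpace ℝ (Fin d) →L[ℝ] EuclideanSpace ℝ (Fin d) :=
  ((piEq d).symm.toContinuousLinearMap.comp
    (ContinuousLinearMap.pi fun k => a k • ContinuousLinearMap.proj k)).comp
    (piEq d).toContinuousLinearMap

lemma diagCLM_apply {d : ℕ} (a : Fin d → ℝ) (v : EuclideanSpace ℝ (Fin d)) (k : Fin d) :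
    diagCLM a v k = a k * v k := rfl

lemma entrywise_hasFDerivAt {d : ℕ} (σ : ℝ → ℝ) (hσ : Differentiable ℝ σ)
    (x : EuclideanSpace ℝ (Fin d)) :
    HasFDerivAt (entrywise σ) (diagCLM fun k => deriv σ (x k)) x := by
  have hg : HasFDerivAt (𝕜 := ℝ) (fun (y : Fin d → ℝ) k => σ (y k))
      (ContinuousLinearMap.pi fun k => deriv σ (x k) • ContinuousLinearMap.proj k)
      ((piEq d) x) := by
    apply hasFDerivAt_pi.2
    intro k
    exact ((hσ (x k)).hasDerivAt).comp_hasFDerivAt ((piEq d) x)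
      (hasFDerivAt_apply k ((piEq d) x))
  have h1 := hg.comp x ((piEq d).toContinuousLinearMap.hasFDerivAt)
  exact (((piEq d).symm.toContinuousLinearMap.hasFDerivAt).comp x h1).congr_fderiv rfl

lemma diagCLM_norm_le {d : ℕ} {a : Fin d → ℝ} {c : ℝ} (hc : 0 ≤ c) (ha : ∀ k, |a k| ≤ c) :
    ‖diagCLM a‖ ≤ c := by
  apply ContinuousLinearMap.opNorm_le_bound _ hc
  intro v
  rw [EuclideanSpace.norm_eq, EuclideanSpace.norm_eq]
  have hsum : ∑ k, ‖diagCLM a v k‖ ^ 2 ≤ ∑ k, c ^ 2 * ‖v k‖ ^ 2 := by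
    apply Finset.sum_le_sum
    intro k _
    rw [diagCLM_apply]
    have : ‖a k * v k‖ ^ 2 = |a k| ^ 2 * ‖v k‖ ^ 2 := by
      rw [norm_mul, Real.norm_eq_abs, mul_pow]
    rw [this]
    gcongr
    exact ha k
  calc √(∑ k, ‖diagCLM a v k‖ ^ 2) ≤ √(∑ k, c ^ 2 * ‖v k‖ ^ 2) := Real.sqrt_le_sqrt hsum
    _ = c * √(∑ k, ‖v k‖ ^ 2) := by
        rw [← Finset.mul_sum, Real.sqrt_mul (sq_nonneg c), Real.sqrt_sq hc]

open scoped Matrix.Norms.L2Operator in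
lemma norm_toEuclideanCLM_transpose {d : ℕ} (A : Matrix (Fin d) (Fin d) ℝ) :
    ‖Matrix.toEuclideanCLM (𝕜 := ℝ) A.transpose‖ = ‖Matrix.toEuclideanCLM (𝕜 := ℝ) A‖ := by
  have h : A.transpose = A.conjTranspose := by
    ext k l; simp [Matrix.conjTranspose_apply]
  rw [h, ← Matrix.cstar_norm_def, ← Matrix.cstar_norm_def, Matrix.l2_opNorm_conjTranspose]

lemma band_pow_succ {T : ℕ} (P : ℕ) (r : ℕ → ℝ) (R : Matrix (Fin T) (Fin T) ℝ)
    (hR : ∀ i j : Fin T,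
      R i j = if j.val ≤ i.val ∧ i.val - j.val < P then r (i.val - j.val) else 0)
    (A : Matrix (Fin T) (Fin T) ℝ) (i j : Fin T) :
    (A * R) i j = ∑ p ∈ Finset.range P,
      (if hp : j.val + p < T then r p * A i ⟨j.val + p, hp⟩ else 0) := by
  rw [Matrix.mul_apply]
  have lhs : (∑ k, A i k * R k j)
      = ∑ k ∈ Finset.univ.filter (fun k : Fin T => j.val ≤ k.val ∧ k.val - j.val < P),
          A i k * r (k.val - j.val) := by
    rw [Finset.sum_filter]
    apply Finset.sum_congr rfl
    intro k _
    rw [hR]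
    split_ifs <;> simp
  have rhs : (∑ p ∈ Finset.range P,
      (if hp : j.val + p < T then r p * A i ⟨j.val + p, hp⟩ else 0))
      = ∑ p ∈ (Finset.range P).filter (fun p => j.val + p < T),
          (if hp : j.val + p < T then r p * A i ⟨j.val + p, hp⟩ else 0) := by
    rw [Finset.sum_filter_of_ne]
    intro p hp hne
    by_contra h
    simp [h] at hne
  rw [lhs, rhs]
  refine Finset.sum_bij' (i := fun (k : Fin T) _ => k.val - j.val)
    (j := fun p hp => (⟨j.val + p, (Finset.mem_filter.mp hp).2⟩ : Fin T)) ?_ ?_ ?_ ?_ ?_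
  · intro k hk
    have h2 := (Finset.mem_filter.mp hk).2
    have := k.isLt
    simp only [Finset.mem_filter, Finset.mem_range]
    omega
  · intro p hp
    have h2 := (Finset.mem_filter.mp hp).1
    simp only [Finset.mem_range] at h2
    refine Finset.mem_filter.mpr ⟨Finset.mem_univ _, ?_, ?_⟩ <;> simp only [Fin.val_mk] <;> omega
  · intro k hk
    have h2 := (Finset.mem_filter.mp hk).2
    exact Fin.ext (by simp only [Fin.val_mk]; omega)
  · intro p hp
    simp only [Fin.val_mk]
    omega
  · intro k hk
    have h2 := (Finset.mem_filter.mp hk).2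
    have hT : j.val + (k.val - j.val) < T := by omega
    rw [dif_pos hT]
    rw [mul_comm]
    congr 1
    exact congrArg (A i) (Fin.ext (by simp only [Fin.val_mk]; omega)).symm

lemma tcn_key
    (T P d : ℕ) (σ : ℝ → ℝ) (hσdiff : Differentiable ℝ σ)
    (cσ : ℝ) (hσ : ∀ x : ℝ, |deriv σ x| ≤ cσ)
    (r : ℕ → ℝ) (hr : ∀ k < P, 0 ≤ r k)
    (W : ℕ → ℕ → Matrix (Fin d) (Fin d) ℝ) (w : ℝ)
    (R : Matrix (Fin T) (Fin T) ℝ)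
    (hR : ∀ i j : Fin T,
      R i j = if j.val ≤ i.val ∧ i.val - j.val < P then r (i.val - j.val) else 0)
    (h0 : Fin T → EuclideanSpace ℝ (Fin d)) :
    ∀ L : ℕ, (∀ l < L, ∀ p < P, ‖Matrix.toEuclideanCLM (𝕜 := ℝ) (W l p)‖ ≤ w) →
    ∀ j : Fin T, ∃ D : (Fin T → EuclideanSpace ℝ (Fin d)) →L[ℝ] EuclideanSpace ℝ (Fin d),
      HasFDerivAt (fun x : Fin T → EuclideanSpace ℝ (Fin d) => tcnStack T P d σ r W L x j) D h0
      ∧ ∀ i : Fin T, ‖D.comp (coordIncl ℝ (EuclideanSpace ℝ (Fin d)) i)‖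
          ≤ (cσ * w) ^ L * (R ^ L) i j := by
  have hcσ : 0 ≤ cσ := le_trans (abs_nonneg _) (hσ 0)
  intro L
  induction L with
  | zero =>
    intro _ j
    refine ⟨ContinuousLinearMap.proj j, ?_, ?_⟩
    · exact hasFDerivAt_apply j h0
    · intro i
      rcases eq_or_ne i j with hij | hij
      · subst hij
        have hcomp : (ContinuousLinearMap.proj (R := ℝ)
              (φ := fun _ : Fin T => EuclideanSpace ℝ (Fin d)) i).comp
            (coordIncl ℝ (EuclideanSpace ℝ (Fin d)) i)
            = ContinuousLinearMap.id ℝ (EuclideanSpace ℝ (Fin d)) := by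
          ext v k
          show (Pi.single i (ContinuousLinearMap.id ℝ (EuclideanSpace ℝ (Fin d)))
            : Fin T → EuclideanSpace ℝ (Fin d) →L[ℝ] EuclideanSpace ℝ (Fin d)) i v k = v k
          rw [Pi.single_eq_same]
          rfl
        rw [hcomp, pow_zero, pow_zero, one_mul, Matrix.one_apply_eq]
        exact ContinuousLinearMap.opNorm_le_bound _ zero_le_one (fun v => by rw [one_mul]; rfl)
      · have hcomp : (ContinuousLinearMap.proj (R := ℝ)
              (φ := fun _ : Fin T => EuclideanSpace ℝ (Fin d)) j).comp
            (coordIncl ℝ (EuclideanSpace ℝ (Fin d)) i) = 0 := by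
          ext v k
          show (Pi.single i (ContinuousLinearMap.id ℝ (EuclideanSpace ℝ (Fin d)))
            : Fin T → EuclideanSpace ℝ (Fin d) →L[ℝ] EuclideanSpace ℝ (Fin d)) j v k
            = (0 : EuclideanSpace ℝ (Fin d)) k
          rw [Pi.single_eq_of_ne (Ne.symm hij)]
          rfl
        rw [hcomp, pow_zero, pow_zero, one_mul, Matrix.one_apply_ne hij, norm_zero]
  | succ L IH =>
    intro hW j
    have hWL : ∀ l < L, ∀ p < P, ‖Matrix.toEuclideanCLM (𝕜 := ℝ) (W l p)‖ ≤ w :=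
      fun l hl => hW l (hl.trans (Nat.lt_succ_self L))
    choose D hDfd hDnorm using IH hWL
    set M : ℕ → (EuclideanSpace ℝ (Fin d) →L[ℝ] EuclideanSpace ℝ (Fin d)) :=
      fun p : ℕ => Matrix.toEuclideanCLM (𝕜 := ℝ) (W L p).transpose with hM
    set Φ : (Fin T → EuclideanSpace ℝ (Fin d)) →L[ℝ] EuclideanSpace ℝ (Fin d) :=
      ∑ p ∈ Finset.range P,
        if hp : j.val + p < T then (r p • M p).comp (D ⟨j.val + p, hp⟩) else 0 with hΦ
    set S0 : EuclideanSpace ℝ (Fin d) :=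
      ∑ p ∈ Finset.range P,
        (if hp : j.val + p < T then
          r p • (M p) ((tcnStack T P d σ r W L h0) ⟨j.val + p, hp⟩) else 0) with hS0
    refine ⟨(diagCLM fun k => deriv σ (S0 k)).comp Φ, ?_, ?_⟩
    · have hinner : HasFDerivAt (fun x : Fin T → EuclideanSpace ℝ (Fin d) =>
          ∑ p ∈ Finset.range P,
            (if hp : j.val + p < T then
              r p • (M p) ((tcnStack T P d σ r W L x) ⟨j.val + p, hp⟩) else 0)) Φ h0 := by
        rw [hΦ]
        apply HasFDerivAt.fun_sum
        intro p _
        by_cases hp : j.val + p < T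
        · simp only [dif_pos hp]
          exact ((r p • M p).hasFDerivAt).comp h0 (hDfd ⟨j.val + p, hp⟩)
        · simp only [dif_neg hp]
          exact hasFDerivAt_const 0 h0
      have hent := entrywise_hasFDerivAt σ hσdiff S0
      have := hent.comp h0 hinner
      exact this
    · intro i
      have hsumcomp : ((diagCLM fun k => deriv σ (S0 k)).comp Φ).comp
            (coordIncl ℝ (EuclideanSpace ℝ (Fin d)) i)
          = (diagCLM fun k => deriv σ (S0 k)).comp (Φ.comp (coordIncl ℝ (EuclideanSpace ℝ (Fin d)) i)) := by
        rw [ContinuousLinearMap.comp_assoc]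
      rw [hsumcomp]
      have hdiag : ‖diagCLM fun k => deriv σ (S0 k)‖ ≤ cσ :=
        diagCLM_norm_le hcσ (fun k => hσ _)
      have hΦb : ‖Φ.comp (coordIncl ℝ (EuclideanSpace ℝ (Fin d)) i)‖
          ≤ ∑ p ∈ Finset.range P,
              (if hp : j.val + p < T then
                (r p * w) * ((cσ * w) ^ L * (R ^ L) i ⟨j.val + p, hp⟩) else 0) := by
        rw [hΦ, ContinuousLinearMap.finset_sum_comp]
        refine le_trans (norm_sum_le _ _) (Finset.sum_le_sum ?_)
        intro p hpmem
        have hpP : p < P := Finset.mem_range.mp hpmem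
        have hw0 : 0 ≤ w := le_trans (norm_nonneg _) (hW L (Nat.lt_succ_self L) p hpP)
        by_cases hp : j.val + p < T
        · simp only [dif_pos hp]
          rw [ContinuousLinearMap.comp_assoc]
          refine le_trans (ContinuousLinearMap.opNorm_comp_le _ _) ?_
          have h1 : ‖r p • M p‖ ≤ r p * w := by
            refine le_trans (ContinuousLinearMap.opNorm_smul_le _ _) ?_
            rw [Real.norm_eq_abs, abs_of_nonneg (hr p hpP)]
            refine mul_le_mul_of_nonneg_left ?_ (hr p hpP)
            rw [hM]
            rw [norm_toEuclideanCLM_transpose]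
            exact hW L (Nat.lt_succ_self L) p hpP
          exact mul_le_mul h1 (hDnorm ⟨j.val + p, hp⟩ i) (norm_nonneg _)
            (mul_nonneg (hr p hpP) hw0)
        · simp only [dif_neg hp]
          rw [ContinuousLinearMap.zero_comp, norm_zero]
      calc ‖(diagCLM fun k => deriv σ (S0 k)).comp (Φ.comp (coordIncl ℝ (EuclideanSpace ℝ (Fin d)) i))‖
          ≤ ‖diagCLM fun k => deriv σ (S0 k)‖ * ‖Φ.comp (coordIncl ℝ (EuclideanSpace ℝ (Fin d)) i)‖ :=
            ContinuousLinearMap.opNorm_comp_le _ _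
        _ ≤ cσ * ∑ p ∈ Finset.range P,
              (if hp : j.val + p < T then
                (r p * w) * ((cσ * w) ^ L * (R ^ L) i ⟨j.val + p, hp⟩) else 0) :=
            mul_le_mul hdiag hΦb (norm_nonneg _) hcσ
        _ = (cσ * w) ^ (L + 1) * (R ^ (L + 1)) i j := by
            have hid : (R ^ (L + 1)) i j = ∑ p ∈ Finset.range P,
                (if hp : j.val + p < T then r p * (R ^ L) i ⟨j.val + p, hp⟩ else 0) := by
              rw [pow_succ]
              exact band_pow_succ P r R hR (R ^ L) i j
            rw [hid, Finset.mul_sum, Finset.mul_sum]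
            apply Finset.sum_congr rfl
            intro p _
            by_cases hp : j.val + p < T
            · simp only [dif_pos hp]
              ring
            · simp only [dif_neg hp]
              ring

/-- For a TCN obtained by stacking `LT` temporal convolutional layers with
the same temporal topology matrix `R` (lower-triangular Toeplitz band matrix with
nonnegative coefficients), weight matrices of spectral norm at most `w`, and differentiable
pointwise activation with `|σ'| ≤ cσ`, the spectral norm of the Jacobian block
`∂h^{(LT)}_{t-j} / ∂h^{(0)}_{t-i}` is at most `(cσ * w)^LT * (R^LT)_{ij}`. -/
theorem tcn_stack_sensitivity
    (T P d LT : ℕ) (σ : ℝ → ℝ) (hσdiff : Differentiable ℝ σ)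
    (cσ : ℝ) (hσ : ∀ x : ℝ, |deriv σ x| ≤ cσ)
    (r : ℕ → ℝ) (hr : ∀ k < P, 0 ≤ r k)
    (W : ℕ → ℕ → Matrix (Fin d) (Fin d) ℝ) (w : ℝ)
    (hW : ∀ l < LT, ∀ p < P, ‖Matrix.toEuclideanCLM (𝕜 := ℝ) (W l p)‖ ≤ w)
    (R : Matrix (Fin T) (Fin T) ℝ)
    (hR : ∀ i j : Fin T,
      R i j = if j.val ≤ i.val ∧ i.val - j.val < P then r (i.val - j.val) else 0)
    (h0 : Fin T → EuclideanSpace ℝ (Fin d)) (i j : Fin T) :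
    ‖(fderiv ℝ (fun x : Fin T → EuclideanSpace ℝ (Fin d) => tcnStack T P d σ r W LT x j)
          h0).comp (coordIncl ℝ (EuclideanSpace ℝ (Fin d)) i)‖
      ≤ (cσ * w) ^ LT * (R ^ LT) i j := by
  obtain ⟨D, hfd, hb⟩ := tcn_key T P d σ hσdiff cσ hσ r hr W w R hR h0 LT hW j
  rw [hfd.fderiv]
  exact hb i

end
end

section
/- Let R ∈ ℝ^{T×T} be a lower-triangular Toeplitz band matrix with lower bandwidth P-1, i.e. (R)_{ij} = r_{i-j} for 0 ≤ i-j < P and (R)_{ij} = 0 otherwise, with P ≥ 2, r_0 ≠ 0, and r_1 ≠ 0. Then for any indices i, j ∈ {0,…,T-1} with i > j, the ratio |(R^l)_{j0} / (R^l)_{i0}| tends to 0 as l → ∞; moreover |(R^l)_{j0} / (R^l)_{i0}| = O(l^{-(i-j)}) as l → ∞. -/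
open Filter Asymptotics

open Polynomial in
private noncomputable def pp (P : ℕ) (r : ℕ → ℝ) : Polynomial ℝ :=
  ∑ k ∈ Finset.range P, C (r k) * X ^ k

open Polynomial in
private lemma pp_coeff (P : ℕ) (r : ℕ → ℝ) (m : ℕ) :
    (pp P r).coeff m = if m < P then r m else 0 := by
  simp [pp, coeff_X_pow, Finset.sum_ite_eq]

open Polynomial in
private lemma pp_succ (P : ℕ) (r : ℕ → ℝ) :
    pp (P + 1) r = X * pp P (fun k => r (k + 1)) + C (r 0) := by
  rw [pp, Finset.sum_range_succ', pp, Finset.mul_sum]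
  congr 1
  · exact Finset.sum_congr rfl fun k _ => by ring
  · simp

open Polynomial in
private noncomputable def FF (q : Polynomial ℝ) (r0 : ℝ) (n : ℕ) : Polynomial ℝ :=
  ∑ m ∈ Finset.range (n + 1),
    C ((q ^ m).coeff (n - m) * r0 ^ (n - m) * (m.factorial : ℝ)⁻¹) * descPochhammer ℝ m

open Polynomial in
private lemma FF_coeff_self (q : Polynomial ℝ) (r0 : ℝ) (n : ℕ) :
    (FF q r0 n).coeff n = q.coeff 0 ^ n * (n.factorial : ℝ)⁻¹ := by
  rw [FF, Polynomial.finset_sum_coeff, Finset.sum_range_succ]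
  have h0 : ∀ m ∈ Finset.range n,
      (C ((q ^ m).coeff (n - m) * r0 ^ (n - m) * (m.factorial : ℝ)⁻¹) *
        descPochhammer ℝ m).coeff n = 0 := by
    intro m hm
    rw [Finset.mem_range] at hm
    rw [Polynomial.coeff_C_mul, Polynomial.coeff_eq_zero_of_natDegree_lt
      (show (descPochhammer ℝ m).natDegree < n by rw [descPochhammer_natDegree]; exact hm),
      mul_zero]
  have h1 : (descPochhammer ℝ n).coeff n = 1 := by
    have := (monic_descPochhammer ℝ n).coeff_natDegree
    rwa [descPochhammer_natDegree] at this
  rw [Finset.sum_eq_zero h0, zero_add, Polynomial.coeff_C_mul, h1, mul_one,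
    Nat.sub_self, pow_zero, mul_one, Polynomial.coeff_zero_eq_eval_zero,
    Polynomial.eval_pow, ← Polynomial.coeff_zero_eq_eval_zero]

open Polynomial in
private lemma FF_degree_le (q : Polynomial ℝ) (r0 : ℝ) (n : ℕ) :
    (FF q r0 n).degree ≤ (n : WithBot ℕ) := by
  refine (Polynomial.degree_sum_le _ _).trans ?_
  refine Finset.sup_le fun m hm => ?_
  rw [Finset.mem_range] at hm
  refine (Polynomial.degree_mul_le _ _).trans ?_
  have hd : (descPochhammer ℝ m).degree = (m : WithBot ℕ) := by
    rw [Polynomial.degree_eq_natDegree (monic_descPochhammer ℝ m).ne_zero,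
      descPochhammer_natDegree]
  calc (C ((q ^ m).coeff (n - m) * r0 ^ (n - m) * (m.factorial : ℝ)⁻¹)).degree
        + (descPochhammer ℝ m).degree
      ≤ 0 + (m : WithBot ℕ) := add_le_add Polynomial.degree_C_le (le_of_eq hd)
    _ ≤ (n : WithBot ℕ) := by
        rw [zero_add]
        exact_mod_cast Nat.le_of_lt_succ (by omega)

open Polynomial in
private lemma pp_pow_coeff (P : ℕ) (r : ℕ → ℝ) (n l : ℕ) (hnl : n ≤ l) :
    ((pp (P + 1) r) ^ l).coeff n
      = r 0 ^ (l - n) * (FF (pp P (fun k => r (k + 1))) (r 0) n).eval (l : ℝ) := by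
  set q := pp P (fun k => r (k + 1)) with hq
  rw [pp_succ, add_pow, Polynomial.finset_sum_coeff]
  have hterm : ∀ m : ℕ,
      ((X * q) ^ m * C (r 0) ^ (l - m) * (l.choose m : Polynomial ℝ)).coeff n
      = if m ≤ n then (q ^ m).coeff (n - m) * (r 0 ^ (l - m) * (l.choose m : ℝ)) else 0 := by
    intro m
    have h1 : (X * q) ^ m * C (r 0) ^ (l - m) * (l.choose m : Polynomial ℝ)
        = q ^ m * C (r 0 ^ (l - m) * (l.choose m : ℝ)) * X ^ m := by
      rw [mul_pow, ← C_pow, ← Polynomial.C_eq_natCast, C_mul]; ring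
    rw [h1, Polynomial.coeff_mul_X_pow']
    simp only [Polynomial.coeff_mul_C]
  simp only [← hq, hterm]
  rw [← Finset.sum_subset (Finset.range_subset_range.2 (by omega) :
      Finset.range (n + 1) ⊆ Finset.range (l + 1))
      (fun m _ hm => if_neg (by rw [Finset.mem_range] at hm; omega))]
  rw [FF, Polynomial.eval_finset_sum, Finset.mul_sum]
  refine Finset.sum_congr rfl fun m hm => ?_
  rw [Finset.mem_range] at hm
  rw [if_pos (by omega), Polynomial.eval_mul, Polynomial.eval_C,
    descPochhammer_eval_eq_descFactorial, Nat.descFactorial_eq_factorial_mul_choose]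
  have hpow : r 0 ^ (l - n) * r 0 ^ (n - m) = r 0 ^ (l - m) := by
    rw [← pow_add]; congr 1; omega
  have hfac : (m.factorial : ℝ) ≠ 0 := Nat.cast_ne_zero.2 m.factorial_ne_zero
  rw [← hpow]
  push_cast
  field_simp

private lemma matrix_pow_coeff (T P : ℕ) (r : ℕ → ℝ) (R : Matrix (Fin T) (Fin T) ℝ)
    (hR : ∀ i j : Fin T,
      R i j = if j.val ≤ i.val ∧ i.val - j.val < P then r (i.val - j.val) else 0)
    (l : ℕ) (n : Fin T) :
    (R ^ l) n ⟨0, n.pos⟩ = ((pp P r) ^ l).coeff n.val := by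
  induction l generalizing n with
  | zero =>
    rw [pow_zero, pow_zero, Matrix.one_apply, Polynomial.coeff_one]
    by_cases h : n.val = 0
    · simp [Fin.ext_iff, h]
    · simp [Fin.ext_iff, h, Ne.symm h]
  | succ l ih =>
    rw [pow_succ', Matrix.mul_apply, pow_succ', Polynomial.coeff_mul,
      Finset.Nat.sum_antidiagonal_eq_sum_range_succ
        (fun a b => (pp P r).coeff a * ((pp P r) ^ l).coeff b),
      ← Finset.sum_range_reflect
        (fun k => (pp P r).coeff k * ((pp P r) ^ l).coeff (n.val - k)) (n.val + 1)]
    simp only [Nat.add_sub_cancel]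
    have hL : ∑ k : Fin T, R n k * (R ^ l) k ⟨0, n.pos⟩
        = ∑ m ∈ Finset.range T,
          (if m ≤ n.val ∧ n.val - m < P then r (n.val - m) else 0) * ((pp P r) ^ l).coeff m := by
      rw [← Fin.sum_univ_eq_sum_range]
      exact Finset.sum_congr rfl fun k _ => by rw [hR, ih k]
    rw [hL, ← Finset.sum_subset (Finset.range_subset_range.2 n.isLt :
        Finset.range (n.val + 1) ⊆ Finset.range T)
        (fun m _ hm => by
          rw [Finset.mem_range] at hm
          rw [if_neg (by omega), zero_mul])]
    refine Finset.sum_congr rfl fun k hk => ?_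
    rw [Finset.mem_range] at hk
    rw [pp_coeff, Nat.sub_sub_self (by omega : k ≤ n.val)]
    by_cases h : n.val - k < P
    · rw [if_pos ⟨by omega, h⟩, if_pos h]
    · rw [if_neg (by tauto), if_neg h]

/-- For a lower-triangular Toeplitz band matrix `R` with lower bandwidth
`P - 1`, `P ≥ 2`, `r 0 ≠ 0` and `r 1 ≠ 0`, the ratio `|(R^l)_{j0} / (R^l)_{i0}|` tends to `0`
as `l → ∞` whenever `i > j`, and in fact it is `O(l^{-(i-j)})`. -/
theorem toeplitz_power_ratio_tendsto_zero
    (T P : ℕ) (hP : 2 ≤ P) (r : ℕ → ℝ) (hr0 : r 0 ≠ 0) (hr1 : r 1 ≠ 0)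
    (R : Matrix (Fin T) (Fin T) ℝ)
    (hR : ∀ i j : Fin T,
      R i j = if j.val ≤ i.val ∧ i.val - j.val < P then r (i.val - j.val) else 0)
    (i j : Fin T) (hij : j < i) :
    Tendsto (fun l : ℕ => |(R ^ l) j ⟨0, j.pos⟩ / (R ^ l) i ⟨0, i.pos⟩|) atTop (nhds 0) ∧
    (fun l : ℕ => |(R ^ l) j ⟨0, j.pos⟩ / (R ^ l) i ⟨0, i.pos⟩|) =O[atTop]
      (fun l : ℕ => ((l : ℝ) ^ (i.val - j.val))⁻¹) := by
  obtain ⟨P', rfl⟩ : ∃ P', P = P' + 1 := ⟨P - 1, by omega⟩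
  set q := pp P' (fun k => r (k + 1)) with hqdef
  have hji : j.val < i.val := hij
  have hq0 : q.coeff 0 = r 1 := by
    rw [hqdef, pp_coeff, if_pos (by omega)]
  have hcoeff : ∀ n : ℕ, (FF q (r 0) n).coeff n ≠ 0 := by
    intro n
    rw [FF_coeff_self, hq0]
    exact mul_ne_zero (pow_ne_zero _ hr1)
      (inv_ne_zero (Nat.cast_ne_zero.2 n.factorial_ne_zero))
  have hdeg : ∀ n : ℕ, (FF q (r 0) n).degree = (n : WithBot ℕ) :=
    fun n => le_antisymm (FF_degree_le q (r 0) n) (Polynomial.le_degree_of_ne_zero (hcoeff n))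
  have hnatdeg : ∀ n : ℕ, (FF q (r 0) n).natDegree = n :=
    fun n => Polynomial.natDegree_eq_of_degree_eq_some (hdeg n)
  have hentry : ∀ (n : Fin T) (l : ℕ), n.val ≤ l →
      (R ^ l) n ⟨0, n.pos⟩ = r 0 ^ (l - n.val) * (FF q (r 0) n.val).eval (l : ℝ) := by
    intro n l h
    rw [matrix_pow_coeff T (P' + 1) r R hR l n, pp_pow_coeff P' r n.val l h]
  have hratio : ∀ᶠ l : ℕ in atTop,
      (R ^ l) j ⟨0, j.pos⟩ / (R ^ l) i ⟨0, i.pos⟩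
        = r 0 ^ (i.val - j.val) *
          ((FF q (r 0) j.val).eval (l : ℝ) / (FF q (r 0) i.val).eval (l : ℝ)) := by
    filter_upwards [eventually_ge_atTop i.val] with l hl
    rw [hentry j l (by omega), hentry i l hl]
    have h1 : r 0 ^ (l - j.val) = r 0 ^ (l - i.val) * r 0 ^ (i.val - j.val) := by
      rw [← pow_add]; congr 1; omega
    rw [h1, mul_assoc, mul_div_mul_left _ _ (pow_ne_zero _ hr0), mul_div_assoc]
  have hdlt : (FF q (r 0) j.val).degree < (FF q (r 0) i.val).degree := by
    rw [hdeg, hdeg]; exact_mod_cast hji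
  have htend0 : Tendsto
      (fun x : ℝ => (FF q (r 0) j.val).eval x / (FF q (r 0) i.val).eval x) atTop (nhds 0) := by
    simpa using Polynomial.div_tendsto_zero_of_degree_lt _ _ hdlt
  have htendN : Tendsto
      (fun l : ℕ => (FF q (r 0) j.val).eval (l : ℝ) / (FF q (r 0) i.val).eval (l : ℝ))
      atTop (nhds 0) := htend0.comp tendsto_natCast_atTop_atTop
  have habs : (fun l : ℕ => |r 0 ^ (i.val - j.val) *
        ((FF q (r 0) j.val).eval (l : ℝ) / (FF q (r 0) i.val).eval (l : ℝ))|) =ᶠ[atTop]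
      (fun l : ℕ => |(R ^ l) j ⟨0, j.pos⟩ / (R ^ l) i ⟨0, i.pos⟩|) :=
    hratio.mono fun l hl => by dsimp only; rw [hl]
  constructor
  · have h := (htendN.const_mul (r 0 ^ (i.val - j.val))).abs
    rw [mul_zero, abs_zero] at h
    exact h.congr' habs
  · have hEq := Polynomial.isEquivalent_atTop_div (FF q (r 0) j.val) (FF q (r 0) i.val)
    rw [hnatdeg, hnatdeg] at hEq
    have hO1 : (fun x : ℝ => (FF q (r 0) j.val).eval x / (FF q (r 0) i.val).eval x) =O[atTop]
        fun x : ℝ => x ^ ((j.val : ℤ) - (i.val : ℤ)) :=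
      hEq.isBigO.trans (isBigO_const_mul_self _ _ _)
    have hO2 : (fun l : ℕ => (FF q (r 0) j.val).eval (l : ℝ) / (FF q (r 0) i.val).eval (l : ℝ))
        =O[atTop] fun l : ℕ => ((l : ℝ)) ^ ((j.val : ℤ) - (i.val : ℤ)) :=
      hO1.comp_tendsto tendsto_natCast_atTop_atTop
    have hfun : ∀ l : ℕ, ((l : ℝ)) ^ ((j.val : ℤ) - (i.val : ℤ))
        = (((l : ℝ)) ^ (i.val - j.val))⁻¹ := by
      intro l
      rw [show ((j.val : ℤ) - (i.val : ℤ)) = -((i.val - j.val : ℕ) : ℤ) by omega,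
        zpow_neg, zpow_natCast]
    have hO3 : (fun l : ℕ => (FF q (r 0) j.val).eval (l : ℝ) / (FF q (r 0) i.val).eval (l : ℝ))
        =O[atTop] fun l : ℕ => (((l : ℝ)) ^ (i.val - j.val))⁻¹ := by
      simpa only [hfun] using hO2
    have hO4 := (hO3.const_mul_left (r 0 ^ (i.val - j.val))).abs_left
    exact hO4.congr' habs EventuallyEq.rfl
end

section
/- Let R ∈ ℝ^{T×T} be a lower-triangular Toeplitz band matrix with lower bandwidth P-1, with P ≥ 2, r_0 ≠ 0, and r_1 ≠ 0. Then for any indices i, j ∈ {0,…,T-1} with i > j, the rescaled ratio l^{i-j} · |(R^l)_{j0} / (R^l)_{i0}| converges, as l → ∞, to the limit (i!/j!) · |r_0/r_1|^{i-j}. -/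
open Filter

open Finset in
lemma aux_inv_pow (m : ℕ) (hm : m ≠ 0) :
    Tendsto (fun l : ℕ => ((l : ℝ)⁻¹) ^ m) atTop (nhds 0) := by
  have h : Tendsto (fun l : ℕ => (l : ℝ)⁻¹) atTop (nhds 0) := by
    simpa using (tendsto_one_div_atTop_nhds_zero_nat : Tendsto (fun n : ℕ => 1 / (n : ℝ)) atTop (nhds 0))
  simpa [zero_pow hm] using h.pow m

lemma choose_div_pow_zero {k n : ℕ} (h : k < n) :
    Tendsto (fun l : ℕ => (l.choose k : ℝ) / (l : ℝ) ^ n) atTop (nhds 0) := by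
  have hb : ∀ l : ℕ, |(l.choose k : ℝ) / (l : ℝ) ^ n| ≤ (l : ℝ)⁻¹ ^ (n - k) := by
    intro l
    rcases Nat.eq_zero_or_pos l with rfl | hl
    · simp [zero_pow (by omega : n ≠ 0), zero_pow (by omega : n - k ≠ 0)]
    have hl0 : (0:ℝ) < (l:ℝ) := by exact_mod_cast hl
    have h1 : (l.choose k : ℝ) ≤ (l : ℝ) ^ k := by exact_mod_cast Nat.choose_le_pow l k
    rw [abs_of_nonneg (by positivity), div_le_iff₀ (by positivity)]
    calc (l.choose k : ℝ) ≤ (l:ℝ)^k := h1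
      _ = (l:ℝ)⁻¹ ^ (n-k) * (l:ℝ)^(n-k) * (l:ℝ)^k := by
          rw [inv_pow, inv_mul_cancel₀ (by positivity), one_mul]
      _ = (l:ℝ)⁻¹ ^ (n-k) * (l:ℝ)^n := by rw [mul_assoc, ← pow_add]; congr 2; omega
  have h0 : Tendsto (fun l : ℕ => |(l.choose k : ℝ) / (l : ℝ) ^ n|) atTop (nhds 0) :=
    squeeze_zero (fun l => abs_nonneg _) hb (aux_inv_pow _ (by omega))
  exact (tendsto_zero_iff_abs_tendsto_zero _).2 h0


open Finset in
lemma choose_div_pow_self (n : ℕ) :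
    Tendsto (fun l : ℕ => (l.choose n : ℝ) / (l : ℝ) ^ n) atTop
      (nhds (1 / n.factorial)) := by
  have hlim : Tendsto (fun l : ℕ => (∏ t ∈ range n, (1 - (t:ℝ)/l)) / n.factorial) atTop
      (nhds (1 / n.factorial)) := by
    have h1 : Tendsto (fun l : ℕ => ∏ t ∈ range n, (1 - (t:ℝ)/l)) atTop (nhds 1) := by
      have := tendsto_finset_prod (f := fun (t : ℕ) (l : ℕ) => 1 - (t:ℝ)/l)
        (x := atTop) (a := fun _ => 1) (range n) (fun t _ => by
          simpa using (tendsto_const_nhds (x := (1:ℝ)) (f := atTop (α := ℕ))).sub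
            (tendsto_const_div_atTop_nhds_zero_nat (t : ℝ)))
      simpa using this
    simpa using h1.div_const (n.factorial : ℝ)
  refine hlim.congr' ?_
  filter_upwards [eventually_ge_atTop (max n 1)] with l hl
  have hn : n ≤ l := le_trans (le_max_left _ _) hl
  have hl1 : 1 ≤ l := le_trans (le_max_right _ _) hl
  have hl0 : (0:ℝ) < (l:ℝ) := by exact_mod_cast hl1
  have hdf : (l.descFactorial n : ℝ) = (n.factorial : ℝ) * l.choose n := by
    exact_mod_cast congrArg (Nat.cast (R := ℝ)) (Nat.descFactorial_eq_factorial_mul_choose l n)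
  have hprod : (l.descFactorial n : ℝ) = ∏ t ∈ range n, ((l:ℝ) - t) := by
    rw [Nat.descFactorial_eq_prod_range]
    push_cast
    refine Finset.prod_congr rfl fun t ht => ?_
    rw [Nat.cast_sub (le_trans (le_of_lt (mem_range.1 ht)) hn)]
  have hfac : (0:ℝ) < n.factorial := by exact_mod_cast n.factorial_pos
  have e1 : ∏ t ∈ range n, (1 - (t:ℝ)/l) = (l.descFactorial n : ℝ) / (l:ℝ)^n := by
    rw [hprod, show (l:ℝ)^n = ∏ _t ∈ range n, (l:ℝ) from by simp,
      ← Finset.prod_div_distrib]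
    exact Finset.prod_congr rfl fun t _ => by field_simp
  rw [e1, hdf]
  field_simp

open Finset in
lemma toeplitz_first_col (T P : ℕ) (hP : 2 ≤ P) (r : ℕ → ℝ) (hr0 : r 0 ≠ 0)
    (R : Matrix (Fin T) (Fin T) ℝ)
    (hR : ∀ i j : Fin T,
      R i j = if j.val ≤ i.val ∧ i.val - j.val < P then r (i.val - j.val) else 0)
    (hT : 0 < T) :
    ∀ n : ℕ, ∀ hn : n < T, ∃ a : ℕ → ℝ,
      a n = (r 1 / r 0) ^ n ∧ (∀ k, n < k → a k = 0) ∧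
      ∀ l, (R ^ l) ⟨n, hn⟩ ⟨0, hT⟩ =
        r 0 ^ l * ∑ k ∈ range (n + 1), a k * (l.choose k : ℝ) := by
  intro n
  induction n using Nat.strong_induction_on with
  | _ n ih =>
  intro hn
  have ih' : ∀ m : ℕ, ∃ a : ℕ → ℝ, ∀ hmn : m < n,
      (a m = (r 1 / r 0) ^ m ∧ (∀ k, m < k → a k = 0) ∧
      ∀ l, (R ^ l) ⟨m, hmn.trans hn⟩ ⟨0, hT⟩ =
        r 0 ^ l * ∑ k ∈ range (m + 1), a k * (l.choose k : ℝ)) := by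
    intro m
    by_cases h : m < n
    · obtain ⟨a, ha⟩ := ih m h (h.trans hn)
      exact ⟨a, fun _ => ha⟩
    · exact ⟨0, fun h' => absurd h' h⟩
  choose A hA using ih'
  set w : ℕ → ℝ := fun m => if n - m < P then r (n - m) / r 0 else 0 with hw
  set a : ℕ → ℝ := fun k => if k = 0 then (if n = 0 then 1 else 0)
    else ∑ m ∈ range n, w m * A m (k - 1) with hadef
  have hvanish : ∀ k, n < k → a k = 0 := by
    intro k hk
    have hk0 : k ≠ 0 := by omega
    rw [hadef]
    simp only [if_neg hk0]
    refine Finset.sum_eq_zero fun m hm => ?_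
    have hmn : m < n := mem_range.1 hm
    rw [(hA m hmn).2.1 (k - 1) (by omega), mul_zero]
  have hatop : a n = (r 1 / r 0) ^ n := by
    rcases Nat.eq_zero_or_pos n with rfl | hnpos
    · simp [hadef]
    have hn0 : n ≠ 0 := by omega
    rw [hadef]
    simp only [if_neg hn0]
    rw [Finset.sum_eq_single (n - 1)]
    · have h1 : n - (n - 1) = 1 := by omega
      have hmn : n - 1 < n := by omega
      rw [hw]
      simp only [h1, if_pos (by omega : 1 < P)]
      rw [(hA (n - 1) hmn).1]
      rw [← pow_succ']
      congr 1
      omega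
    · intro m hm hne
      have hmn : m < n := mem_range.1 hm
      rw [(hA m hmn).2.1 (n - 1) (by omega), mul_zero]
    · intro h
      exact absurd (mem_range.2 (by omega)) h
  refine ⟨a, hatop, hvanish, ?_⟩
  intro l
  induction l with
  | zero =>
    rw [pow_zero, Matrix.one_apply]
    rw [pow_zero, one_mul, Finset.sum_eq_single 0]
    · rw [hadef]
      simp only [Nat.choose_self, Nat.cast_one, mul_one, if_pos rfl]
      by_cases h : n = 0
      · subst h
        simp [Fin.mk_eq_mk]
      · simp [Fin.mk_eq_mk, h]
    · intro k hk hk0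
      rw [Nat.choose_eq_zero_of_lt (by omega), Nat.cast_zero, mul_zero]
    · intro h
      exact absurd (mem_range.2 (by omega)) h
  | succ l hl =>
    have step1 : (R ^ (l+1)) ⟨n, hn⟩ ⟨0, hT⟩
        = ∑ m ∈ range (n+1), (if h : m < T then
            (if n - m < P then r (n - m) else 0) * (R ^ l) ⟨m, h⟩ ⟨0, hT⟩ else 0) := by
      rw [pow_succ', Matrix.mul_apply]
      have e1 : ∑ m : Fin T, R ⟨n,hn⟩ m * (R ^ l) m ⟨0,hT⟩
          = ∑ m ∈ range T, (if h : m < T then R ⟨n,hn⟩ ⟨m,h⟩ * (R ^ l) ⟨m,h⟩ ⟨0,hT⟩ else 0) := by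
        rw [← Fin.sum_univ_eq_sum_range]
        exact Finset.sum_congr rfl fun m _ => by simp
      rw [e1, ← Finset.sum_subset (Finset.range_subset_range.2 (by omega : n+1 ≤ T))]
      · refine Finset.sum_congr rfl fun m hm => ?_
        have hmT : m < T := by have := mem_range.1 hm; omega
        have hmn : m ≤ n := by have := mem_range.1 hm; omega
        rw [dif_pos hmT, dif_pos hmT, hR]
        simp only [hmn, true_and]
      · intro m hmT hm
        have hmn : ¬ (m ≤ n) := fun h => hm (mem_range.2 (by omega))
        rw [dif_pos (mem_range.1 hmT), hR]
        simp [hmn]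
    rw [step1, Finset.sum_range_succ, dif_pos hn]
    have hlast : (if n - n < P then r (n - n) else 0) = r 0 := by
      simp [Nat.sub_self, if_pos (by omega : 0 < P)]
    rw [hlast, hl]
    have hterm : ∀ m ∈ range n, (if h : m < T then
        (if n - m < P then r (n - m) else 0) * (R ^ l) ⟨m, h⟩ ⟨0, hT⟩ else 0)
        = (r 0 * w m) * (r 0 ^ l * ∑ k ∈ range n, A m k * (l.choose k : ℝ)) := by
      intro m hm
      have hmn : m < n := mem_range.1 hm
      have hmT : m < T := hmn.trans hn
      have hext : ∑ k ∈ range (m+1), A m k * (l.choose k : ℝ)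
          = ∑ k ∈ range n, A m k * (l.choose k : ℝ) := by
        refine Finset.sum_subset (Finset.range_subset_range.2 (by omega)) fun k hk hk' => ?_
        rw [(hA m hmn).2.1 k (by have := mem_range.1 hk; have : ¬ k < m + 1 := fun h => hk' (mem_range.2 h); omega), zero_mul]
      have hc : (R ^ l) ⟨m, hmT⟩ ⟨0, hT⟩
          = r 0 ^ l * ∑ k ∈ range n, A m k * (l.choose k : ℝ) := by
        rw [show (⟨m, hmT⟩ : Fin T) = ⟨m, hmn.trans hn⟩ from rfl, (hA m hmn).2.2 l, hext]
      rw [dif_pos hmT, hc, hw]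
      by_cases hb : n - m < P
      · simp only [if_pos hb]
        field_simp
      · simp [hb]
    rw [Finset.sum_congr rfl hterm]
    have E2 : ∑ j ∈ range n, a (j+1) * (l.choose j : ℝ)
        = ∑ m ∈ range n, w m * ∑ k ∈ range n, A m k * (l.choose k : ℝ) := by
      have ha1 : ∀ j, a (j+1) = ∑ m ∈ range n, w m * A m j := by
        intro j; rw [hadef]; simp
      rw [Finset.sum_congr rfl fun j _ => by rw [ha1 j, Finset.sum_mul]]
      rw [Finset.sum_comm]
      refine Finset.sum_congr rfl fun m _ => ?_
      rw [Finset.mul_sum]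
      exact Finset.sum_congr rfl fun j _ => by ring
    have E : ∑ k ∈ range (n+1), a k * ((l+1).choose k : ℝ)
        = ∑ k ∈ range (n+1), a k * (l.choose k : ℝ)
          + ∑ j ∈ range n, a (j+1) * (l.choose j : ℝ) := by
      rw [Finset.sum_range_succ' (fun k => a k * ((l+1).choose k : ℝ)) n,
        Finset.sum_range_succ' (fun k => a k * (l.choose k : ℝ)) n]
      have hp : ∀ j ∈ range n, a (j+1) * (((l+1).choose (j+1) : ℕ) : ℝ)
          = a (j+1) * (l.choose j : ℝ) + a (j+1) * (l.choose (j+1) : ℝ) := by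
        intro j _
        rw [Nat.choose_succ_succ]
        push_cast
        ring
      rw [Finset.sum_congr rfl hp, Finset.sum_add_distrib]
      simp [Nat.choose_zero_right]
      ring
    calc ∑ m ∈ range n, (r 0 * w m) * (r 0 ^ l * ∑ k ∈ range n, A m k * (l.choose k : ℝ))
          + r 0 * (r 0 ^ l * ∑ k ∈ range (n+1), a k * (l.choose k : ℝ))
        = r 0 ^ (l+1) * (∑ k ∈ range (n+1), a k * (l.choose k : ℝ)
            + ∑ m ∈ range n, w m * ∑ k ∈ range n, A m k * (l.choose k : ℝ)) := by
          have h1 : ∑ m ∈ range n, (r 0 * w m) * (r 0 ^ l * ∑ k ∈ range n, A m k * (l.choose k : ℝ))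
              = r 0 ^ (l+1) * ∑ m ∈ range n, w m * ∑ k ∈ range n, A m k * (l.choose k : ℝ) := by
            rw [Finset.mul_sum]
            exact Finset.sum_congr rfl fun m _ => by ring
          rw [h1]
          ring
      _ = r 0 ^ (l+1) * ∑ k ∈ range (n+1), a k * ((l+1).choose k : ℝ) := by
          rw [E, E2]

open Finset in
lemma toeplitz_row_limit (T P : ℕ) (hP : 2 ≤ P) (r : ℕ → ℝ) (hr0 : r 0 ≠ 0)
    (R : Matrix (Fin T) (Fin T) ℝ)
    (hR : ∀ i j : Fin T,
      R i j = if j.val ≤ i.val ∧ i.val - j.val < P then r (i.val - j.val) else 0)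
    (hT : 0 < T) (n : ℕ) (hn : n < T) :
    Tendsto (fun l : ℕ => (R ^ l) ⟨n, hn⟩ ⟨0, hT⟩ / (r 0 ^ l * (l : ℝ) ^ n)) atTop
      (nhds ((r 1 / r 0) ^ n / n.factorial)) := by
  obtain ⟨a, ha1, ha2, ha3⟩ := toeplitz_first_col T P hP r hr0 R hR hT n hn
  have heq : ∀ l : ℕ, (R ^ l) ⟨n, hn⟩ ⟨0, hT⟩ / (r 0 ^ l * (l : ℝ) ^ n)
      = ∑ k ∈ range (n + 1), a k * ((l.choose k : ℝ) / (l : ℝ) ^ n) := by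
    intro l
    rw [ha3 l, ← div_div,
      mul_div_cancel_left₀ _ (pow_ne_zero l hr0), Finset.sum_div]
    exact Finset.sum_congr rfl fun k _ => by rw [mul_div_assoc]
  have hlim : Tendsto
      (fun l : ℕ => ∑ k ∈ range (n + 1), a k * ((l.choose k : ℝ) / (l : ℝ) ^ n)) atTop
      (nhds (∑ k ∈ range (n + 1), a k * (if k = n then (1 / n.factorial : ℝ) else 0))) := by
    refine tendsto_finset_sum _ fun k hk => ?_
    rcases eq_or_lt_of_le (Nat.lt_succ_iff.1 (mem_range.1 hk)) with rfl | hlt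
    · simpa using (choose_div_pow_self k).const_mul (a k)
    · simpa [Nat.ne_of_lt hlt] using (choose_div_pow_zero hlt).const_mul (a k)
  have hval : ∑ k ∈ range (n + 1), a k * (if k = n then (1 / n.factorial : ℝ) else 0)
      = (r 1 / r 0) ^ n / n.factorial := by
    rw [Finset.sum_eq_single n]
    · rw [ha1, if_pos rfl]; ring
    · intro k _ hk; rw [if_neg hk, mul_zero]
    · intro h; exact absurd (mem_range.2 (by omega)) h
  rw [← hval]
  exact hlim.congr fun l => (heq l).symm

/-- For a lower-triangular Toeplitz band matrix `R` with lower bandwidth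
`P - 1`, `P ≥ 2`, `r 0 ≠ 0` and `r 1 ≠ 0`, the rescaled ratio
`l^{i-j} · |(R^l)_{j0} / (R^l)_{i0}|` converges, as `l → ∞`, to `(i!/j!) · |r 0 / r 1|^{i-j}`
whenever `i > j`. -/
theorem toeplitz_power_ratio_rescaled_limit
    (T P : ℕ) (hP : 2 ≤ P) (r : ℕ → ℝ) (hr0 : r 0 ≠ 0) (hr1 : r 1 ≠ 0)
    (R : Matrix (Fin T) (Fin T) ℝ)
    (hR : ∀ i j : Fin T,
      R i j = if j.val ≤ i.val ∧ i.val - j.val < P then r (i.val - j.val) else 0)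
    (i j : Fin T) (hij : j < i) :
    Tendsto
      (fun l : ℕ => (l : ℝ) ^ (i.val - j.val) * |(R ^ l) j ⟨0, j.pos⟩ / (R ^ l) i ⟨0, i.pos⟩|)
      atTop
      (nhds (((Nat.factorial i.val : ℝ) / (Nat.factorial j.val : ℝ)) *
        |r 0 / r 1| ^ (i.val - j.val))) := by
  have hT : 0 < T := i.pos
  set q : ℝ := r 1 / r 0 with hq
  have hqne : q ≠ 0 := div_ne_zero hr1 hr0
  have hUi : Tendsto (fun l : ℕ => (R ^ l) i ⟨0, i.pos⟩ / (r 0 ^ l * (l : ℝ) ^ i.val)) atTop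
      (nhds (q ^ i.val / i.val.factorial)) := by
    have h := toeplitz_row_limit T P hP r hr0 R hR i.pos i.val i.isLt
    simpa using h
  have hUj : Tendsto (fun l : ℕ => (R ^ l) j ⟨0, j.pos⟩ / (r 0 ^ l * (l : ℝ) ^ j.val)) atTop
      (nhds (q ^ j.val / j.val.factorial)) := by
    have h := toeplitz_row_limit T P hP r hr0 R hR j.pos j.val j.isLt
    simpa using h
  have hLi_ne : q ^ i.val / (i.val.factorial : ℝ) ≠ 0 :=
    div_ne_zero (pow_ne_zero _ hqne) (Nat.cast_ne_zero.2 i.val.factorial_ne_zero)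
  have hmain := ((hUj.div hUi hLi_ne).abs)
  have hval : |(q ^ j.val / j.val.factorial) / (q ^ i.val / (i.val.factorial : ℝ))|
      = ((i.val.factorial : ℝ) / j.val.factorial) * |r 0 / r 1| ^ (i.val - j.val) := by
    have epow : q ^ i.val = q ^ j.val * q ^ (i.val - j.val) := by
      rw [← pow_add]; congr 1; omega
    have h1 : (q ^ j.val / j.val.factorial) / (q ^ i.val / (i.val.factorial : ℝ))
        = ((i.val.factorial : ℝ) / j.val.factorial) * (r 0 / r 1) ^ (i.val - j.val) := by
      rw [epow, hq]
      have hfj : (j.val.factorial : ℝ) ≠ 0 := Nat.cast_ne_zero.2 j.val.factorial_ne_zero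
      have hd : (r 1 / r 0) ^ (i.val - j.val) ≠ 0 := pow_ne_zero _ hqne
      simp only [div_pow]
      field_simp
    rw [h1, abs_mul, abs_pow, abs_of_nonneg (by positivity)]
  rw [← hval]
  refine hmain.congr' ?_
  filter_upwards [hUi.eventually_ne hLi_ne, eventually_ge_atTop 1] with l hne hl1
  have hl0 : (0 : ℝ) < (l : ℝ) := by exact_mod_cast hl1
  have hci : (R ^ l) i ⟨0, i.pos⟩ ≠ 0 := by
    intro h
    exact hne (by rw [h, zero_div])
  have hr0l : r 0 ^ l ≠ 0 := pow_ne_zero _ hr0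
  have epow : (l : ℝ) ^ i.val = (l : ℝ) ^ j.val * (l : ℝ) ^ (i.val - j.val) := by
    rw [← pow_add]; congr 1; omega
  have e2 : ((R ^ l) j ⟨0, j.pos⟩ / (r 0 ^ l * (l : ℝ) ^ j.val)) /
        ((R ^ l) i ⟨0, i.pos⟩ / (r 0 ^ l * (l : ℝ) ^ i.val))
      = ((R ^ l) j ⟨0, j.pos⟩ / (R ^ l) i ⟨0, i.pos⟩) * (l : ℝ) ^ (i.val - j.val) := by
    rw [epow]
    field_simp [hci, hr0l, ne_of_gt hl0]
  simp only [Pi.div_apply]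
  rw [e2, abs_mul, abs_pow, Nat.abs_cast, mul_comm]
end

section
/- Let R ∈ ℝ^{T×T} be a lower-triangular Toeplitz band matrix with lower bandwidth P-1, with P ≥ 2, r_0 ≠ 0, and r_1 ≠ 0. Then for every fixed i ∈ {1,…,T-1}, the entry (R^l)_{i0} is asymptotically equivalent to binom(l, i) · r_0^{l-i} · r_1^{i} as l → ∞, i.e. the quotient (R^l)_{i0} / (binom(l, i) · r_0^{l-i} · r_1^{i}) converges to 1 as l → ∞. -/
open Filter Finset Polynomial

private lemma aux_coeff_pow_lt (q : Polynomial ℝ) (hq : q.coeff 0 = 0) :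
    ∀ s b : ℕ, b < s → (q ^ s).coeff b = 0 := by
  intro s
  induction s with
  | zero => intro b h; omega
  | succ s ih =>
    intro b hb
    rw [pow_succ, Polynomial.coeff_mul, Finset.Nat.sum_antidiagonal_eq_sum_range_succ_mk]
    apply Finset.sum_eq_zero
    intro k hk
    simp only [Finset.mem_range] at hk
    rcases lt_or_ge k s with h0 | h0
    · rw [ih k h0, zero_mul]
    · have : b - k = 0 := by omega
      have hbk : k = b := by omega
      rw [this, hq, mul_zero]

private lemma aux_coeff_pow_self (q : Polynomial ℝ) (hq : q.coeff 0 = 0) :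
    ∀ s : ℕ, (q ^ s).coeff s = (q.coeff 1) ^ s := by
  intro s
  induction s with
  | zero => simp
  | succ s ih =>
    rw [pow_succ, Polynomial.coeff_mul, Finset.Nat.sum_antidiagonal_eq_sum_range_succ_mk]
    rw [Finset.sum_eq_single s]
    · simp only [ih, Nat.add_sub_cancel_left]
      rw [pow_succ]
    · intro k hk hne
      simp only [Finset.mem_range] at hk
      rcases lt_or_ge k s with h0 | h0
      · rw [aux_coeff_pow_lt q hq s k h0, zero_mul]
      · have hk1 : k = s + 1 := by omega
        have : s + 1 - k = 0 := by omega
        rw [this, hq, mul_zero]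
    · intro h
      simp only [Finset.mem_range] at h
      omega

private noncomputable def toMat (T : ℕ) (p : Polynomial ℝ) : Matrix (Fin T) (Fin T) ℝ :=
  Matrix.of fun i j => if (j : ℕ) ≤ (i : ℕ) then p.coeff ((i : ℕ) - (j : ℕ)) else 0

private lemma toMat_one (T : ℕ) : toMat T 1 = 1 := by
  ext i j
  simp only [toMat, Matrix.of_apply, Polynomial.coeff_one, Matrix.one_apply]
  by_cases h : (j : ℕ) ≤ (i : ℕ)
  · rw [if_pos h]
    by_cases h2 : i = j
    · subst h2; simp
    · have : ¬ ((i : ℕ) - (j : ℕ) = 0) := by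
        have := Fin.val_ne_of_ne h2
        omega
      rw [if_neg this, if_neg h2]
  · rw [if_neg h, if_neg]
    intro h2; subst h2; exact h le_rfl

private lemma toMat_mul (T : ℕ) (p q : Polynomial ℝ) :
    toMat T p * toMat T q = toMat T (p * q) := by
  ext i j
  simp only [Matrix.mul_apply, toMat, Matrix.of_apply]
  by_cases hij : (j : ℕ) ≤ (i : ℕ)
  · rw [if_pos hij]
    have hsum : ∑ k : Fin T, (if (k : ℕ) ≤ (i : ℕ) then p.coeff ((i : ℕ) - k) else 0) *
        (if (j : ℕ) ≤ (k : ℕ) then q.coeff ((k : ℕ) - j) else 0)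
        = ∑ k ∈ Finset.range T, (if k ≤ (i : ℕ) then p.coeff ((i : ℕ) - k) else 0) *
        (if (j : ℕ) ≤ k then q.coeff (k - (j : ℕ)) else 0) :=
      Fin.sum_univ_eq_sum_range
        (fun k : ℕ => (if k ≤ (i : ℕ) then p.coeff ((i : ℕ) - k) else 0) *
          (if (j : ℕ) ≤ k then q.coeff (k - (j : ℕ)) else 0)) T
    rw [hsum]
    have hsub : Finset.Icc (j : ℕ) (i : ℕ) ⊆ Finset.range T := by
      intro k hk
      simp only [Finset.mem_Icc] at hk
      simp only [Finset.mem_range]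
      exact lt_of_le_of_lt hk.2 i.isLt
    rw [← Finset.sum_subset hsub (by
      intro k _ hk
      simp only [Finset.mem_Icc, not_and_or, not_le] at hk
      rcases hk with h | h
      · rw [if_neg (show ¬ (j : ℕ) ≤ k by omega), mul_zero]
      · rw [if_neg (show ¬ k ≤ (i : ℕ) by omega), zero_mul])]
    rw [Finset.sum_congr rfl (fun k hk => by
      simp only [Finset.mem_Icc] at hk
      rw [if_pos hk.2, if_pos hk.1])]
    have : Finset.Icc (j : ℕ) (i : ℕ) = Finset.Ico (j : ℕ) ((i : ℕ) + 1) := by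
      rw [Finset.Ico_add_one_right_eq_Icc]
    rw [this, Finset.sum_Ico_eq_sum_range]
    rw [mul_comm p q, Polynomial.coeff_mul, Finset.Nat.sum_antidiagonal_eq_sum_range_succ_mk]
    have hrange : (i : ℕ) + 1 - (j : ℕ) = ((i : ℕ) - (j : ℕ)) + 1 := by omega
    rw [hrange]
    apply Finset.sum_congr rfl
    intro k hk
    simp only [Finset.mem_range] at hk
    have h1 : (i : ℕ) - ((j : ℕ) + k) = (i : ℕ) - (j : ℕ) - k := by omega
    have h2 : (j : ℕ) + k - (j : ℕ) = k := by omega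
    rw [h1, h2, mul_comm]
  · rw [if_neg hij]
    apply Finset.sum_eq_zero
    intro k _
    by_cases h1 : (k : ℕ) ≤ (i : ℕ)
    · rw [if_neg (show ¬ (j : ℕ) ≤ (k : ℕ) by omega), mul_zero]
    · rw [if_neg h1, zero_mul]

private lemma toMat_pow (T : ℕ) (p : Polynomial ℝ) (l : ℕ) :
    (toMat T p) ^ l = toMat T (p ^ l) := by
  induction l with
  | zero => rw [pow_zero, pow_zero, toMat_one]
  | succ l ih => rw [pow_succ, pow_succ, ih, toMat_mul]

private lemma choose_ratio_succ (s : ℕ) :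
    Tendsto (fun l : ℕ => (l.choose s : ℝ) / l.choose (s + 0 + 1)) atTop (nhds 0) := by
    have hev : (fun l : ℕ => (l.choose s : ℝ) / l.choose (s + 0 + 1)) =ᶠ[atTop]
        (fun l : ℕ => ((s : ℝ) + 1) / ((l : ℝ) - s)) := by
      filter_upwards [eventually_ge_atTop (s + 1)] with l hl
      have hc : (l.choose (s + 1) : ℝ) ≠ 0 := by
        exact_mod_cast (Nat.choose_pos hl).ne'
      have hls : ((l : ℝ) - s) ≠ 0 := by
        have : (s : ℝ) < (l : ℝ) := by exact_mod_cast (by omega : s < l)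
        linarith
      have h := Nat.choose_succ_right_eq l s
      have hcast : (l.choose (s + 1) : ℝ) * ((s : ℝ) + 1) = (l.choose s : ℝ) * ((l : ℝ) - s) := by
        have hsl : s ≤ l := by omega
        have := congrArg (Nat.cast : ℕ → ℝ) h
        push_cast [Nat.cast_sub hsl] at this
        linarith
      rw [show s + 0 + 1 = s + 1 from rfl, div_eq_div_iff hc hls]
      linarith
    apply Tendsto.congr' hev.symm
    have hden : Tendsto (fun l : ℕ => (l : ℝ) - s) atTop atTop := by
      have := tendsto_atTop_add_const_right atTop (-(s : ℝ))
        (tendsto_natCast_atTop_atTop (R := ℝ))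
      simpa [sub_eq_add_neg] using this
    exact Tendsto.div_atTop tendsto_const_nhds hden

private lemma choose_ratio_tendsto (s d : ℕ) :
    Tendsto (fun l : ℕ => (l.choose s : ℝ) / l.choose (s + d + 1)) atTop (nhds 0) := by
  induction d generalizing s with
  | zero => exact choose_ratio_succ s
  | succ d ih =>
    have hev : (fun l : ℕ => (l.choose s : ℝ) / l.choose (s + (d + 1) + 1)) =ᶠ[atTop]
        (fun l : ℕ => ((l.choose s : ℝ) / l.choose (s + 1)) *
          ((l.choose (s + 1) : ℝ) / l.choose ((s + 1) + d + 1))) := by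
      filter_upwards [eventually_ge_atTop (s + 1)] with l hl
      have hc : (l.choose (s + 1) : ℝ) ≠ 0 := by
        exact_mod_cast (Nat.choose_pos hl).ne'
      have harr : s + (d + 1) + 1 = (s + 1) + d + 1 := by omega
      rw [harr, div_mul_div_comm, mul_comm (l.choose s : ℝ) (l.choose (s+1) : ℝ),
        mul_div_mul_left _ _ hc]
    rw [show (0 : ℝ) = 0 * 0 by ring]
    exact Tendsto.congr' hev.symm ((choose_ratio_succ s).mul (ih (s + 1)))

/-- For a lower-triangular Toeplitz band matrix `R` with lower bandwidth
`P - 1`, `P ≥ 2`, `r 0 ≠ 0` and `r 1 ≠ 0`, and every fixed row index `i ≥ 1`, the entry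
`(R^l)_{i0}` is asymptotically equivalent to `binom(l, i) · r 0 ^ (l - i) · r 1 ^ i`
as `l → ∞`, i.e. the quotient of the two converges to `1`. -/
theorem toeplitz_power_entry_asymptotics
    (T P : ℕ) (hP : 2 ≤ P) (r : ℕ → ℝ) (hr0 : r 0 ≠ 0) (hr1 : r 1 ≠ 0)
    (R : Matrix (Fin T) (Fin T) ℝ)
    (hR : ∀ i j : Fin T,
      R i j = if j.val ≤ i.val ∧ i.val - j.val < P then r (i.val - j.val) else 0)
    (i : Fin T) (hi : 1 ≤ i.val) :
    Tendsto
      (fun l : ℕ =>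
        (R ^ l) i ⟨0, i.pos⟩ / ((Nat.choose l i.val : ℝ) * r 0 ^ (l - i.val) * r 1 ^ i.val))
      atTop (nhds 1) := by
  classical
  set p : Polynomial ℝ := ∑ k ∈ Finset.range P, Polynomial.C (r k) * Polynomial.X ^ k with hp
  have hpc : ∀ m, p.coeff m = if m < P then r m else 0 := by
    intro m
    rw [hp, Polynomial.finset_sum_coeff]
    simp only [Polynomial.coeff_C_mul, Polynomial.coeff_X_pow]
    rw [Finset.sum_congr rfl (fun k _ => by rw [mul_ite, mul_one, mul_zero])]
    rw [Finset.sum_ite_eq (Finset.range P) m r]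
    simp [Finset.mem_range]
  have hRp : R = toMat T p := by
    ext a b
    rw [hR]
    simp only [toMat, Matrix.of_apply, hpc]
    by_cases h1 : (b : ℕ) ≤ (a : ℕ)
    · by_cases h2 : (a : ℕ) - (b : ℕ) < P
      · rw [if_pos ⟨h1, h2⟩, if_pos h1, if_pos h2]
      · rw [if_neg (by tauto), if_pos h1, if_neg h2]
    · rw [if_neg (by tauto), if_neg h1]
  have hentry : ∀ l, (R ^ l) i ⟨0, i.pos⟩ = (p ^ l).coeff i.val := by
    intro l
    rw [hRp, toMat_pow]
    simp only [toMat, Matrix.of_apply]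
    rw [if_pos (Nat.zero_le _), Nat.sub_zero]
  set q : Polynomial ℝ := Polynomial.C (r 0)⁻¹ * (p - Polynomial.C (r 0)) with hq
  have hq0 : q.coeff 0 = 0 := by
    rw [hq]
    simp only [Polynomial.coeff_C_mul, Polynomial.coeff_sub, Polynomial.coeff_C]
    rw [hpc, if_pos (by omega : 0 < P)]
    simp
  have hq1 : q.coeff 1 = (r 0)⁻¹ * r 1 := by
    rw [hq]
    simp only [Polynomial.coeff_C_mul, Polynomial.coeff_sub, Polynomial.coeff_C]
    rw [hpc, if_pos (by omega : 1 < P)]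
    simp
  have hpq : p = Polynomial.C (r 0) * (1 + q) := by
    have hC : Polynomial.C (r 0) * Polynomial.C (r 0)⁻¹ = 1 := by
      rw [← Polynomial.C_mul, mul_inv_cancel₀ hr0, Polynomial.C_1]
    calc p = Polynomial.C (r 0) + 1 * (p - Polynomial.C (r 0)) := by ring
    _ = Polynomial.C (r 0) + (Polynomial.C (r 0) * Polynomial.C (r 0)⁻¹) *
          (p - Polynomial.C (r 0)) := by rw [hC]
    _ = Polynomial.C (r 0) * (1 + q) := by rw [hq]; ring
  set A : ℕ → ℝ := fun s => (q ^ s).coeff i.val with hA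
  have key : ∀ l, (p ^ l).coeff i.val
      = r 0 ^ l * ∑ s ∈ Finset.range (i.val + 1), (l.choose s : ℝ) * A s := by
    intro l
    rw [hpq, mul_pow, ← map_pow, Polynomial.coeff_C_mul]
    congr 1
    rw [add_comm (1 : Polynomial ℝ) q, add_pow, Polynomial.finset_sum_coeff]
    have hterm : ∀ s, (q ^ s * 1 ^ (l - s) * (l.choose s : Polynomial ℝ)).coeff i.val
        = (l.choose s : ℝ) * A s := by
      intro s
      rw [one_pow, mul_one, ← Polynomial.C_eq_natCast, Polynomial.coeff_mul_C, hA, mul_comm]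
    rw [Finset.sum_congr rfl (fun s _ => hterm s)]
    set g : ℕ → ℝ := fun s => (l.choose s : ℝ) * A s with hg
    have e1 : ∀ s, l < s → g s = 0 := by
      intro s hs
      rw [hg]
      simp only [Nat.choose_eq_zero_of_lt hs, Nat.cast_zero, zero_mul]
    have e2 : ∀ s, i.val < s → g s = 0 := by
      intro s hs
      rw [hg]
      simp only [hA, aux_coeff_pow_lt q hq0 s i.val hs, mul_zero]
    have h1 : ∑ s ∈ Finset.range (l + 1), g s = ∑ s ∈ Finset.range (l + i.val + 1), g s :=
      Finset.sum_subset (Finset.range_subset_range.2 (by omega))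
        (fun x _ hx => e1 x (by simpa using hx))
    have h2 : ∑ s ∈ Finset.range (i.val + 1), g s = ∑ s ∈ Finset.range (l + i.val + 1), g s :=
      Finset.sum_subset (Finset.range_subset_range.2 (by omega))
        (fun x _ hx => e2 x (by simpa using hx))
    rw [h1, ← h2]
  set K : ℕ → ℝ := fun s => A s * r 0 ^ i.val / r 1 ^ i.val with hK
  have hKi : K i.val = 1 := by
    rw [hK]
    simp only [hA, aux_coeff_pow_self q hq0 i.val, hq1]
    rw [← mul_pow]
    have : (r 0)⁻¹ * r 1 * r 0 = r 1 := by field_simp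
    rw [this, div_self (pow_ne_zero _ hr1)]
  have hfeq : (fun l : ℕ =>
        (R ^ l) i ⟨0, i.pos⟩ / ((Nat.choose l i.val : ℝ) * r 0 ^ (l - i.val) * r 1 ^ i.val))
      =ᶠ[atTop]
      (fun l : ℕ => ∑ s ∈ Finset.range (i.val + 1),
        (l.choose s : ℝ) / (l.choose i.val) * K s) := by
    filter_upwards [eventually_ge_atTop i.val] with l hl
    rw [hentry, key]
    have hchoose : (l.choose i.val : ℝ) ≠ 0 := by
      exact_mod_cast (Nat.choose_pos hl).ne'
    have hr0p : r 0 ^ (l - i.val) ≠ 0 := pow_ne_zero _ hr0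
    have hr1p : r 1 ^ i.val ≠ 0 := pow_ne_zero _ hr1
    have hsplit : r 0 ^ l = r 0 ^ (l - i.val) * r 0 ^ i.val := by
      rw [← pow_add]
      congr 1
      omega
    rw [hsplit, Finset.mul_sum, Finset.sum_div]
    apply Finset.sum_congr rfl
    intro s _
    rw [hK]
    field_simp
  have hlim : Tendsto (fun l : ℕ => ∑ s ∈ Finset.range (i.val + 1),
      (l.choose s : ℝ) / (l.choose i.val) * K s) atTop
      (nhds (∑ s ∈ Finset.range (i.val + 1), (if s = i.val then (1 : ℝ) else 0) * K s)) := by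
    apply tendsto_finset_sum
    intro s hs
    simp only [Finset.mem_range] at hs
    rcases eq_or_lt_of_le (Nat.lt_succ_iff.mp hs) with heq | hlt
    · rw [heq, if_pos rfl, one_mul]
      apply Tendsto.congr' ?_ (tendsto_const_nhds (x := K i.val))
      filter_upwards [eventually_ge_atTop i.val] with l hl
      have hchoose : (l.choose i.val : ℝ) ≠ 0 := by
        exact_mod_cast (Nat.choose_pos hl).ne'
      rw [div_self hchoose, one_mul]
    · rw [if_neg (by omega), zero_mul]
      have := (choose_ratio_tendsto s (i.val - s - 1)).mul_const (K s)
      rw [zero_mul] at this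
      have harr : s + (i.val - s - 1) + 1 = i.val := by omega
      rw [harr] at this
      exact this
  rw [Filter.tendsto_congr' hfeq]
  have hsum : ∑ s ∈ Finset.range (i.val + 1), (if s = i.val then (1 : ℝ) else 0) * K s
      = 1 := by
    rw [Finset.sum_congr rfl (fun s _ => by rw [ite_mul, one_mul, zero_mul])]
    rw [Finset.sum_ite_eq' (Finset.range (i.val + 1)) i.val K]
    rw [if_pos (by simp), hKi]
  rw [← hsum]
  exact hlim
end

section
/- Let R ∈ ℝ^{T×T} be a lower-triangular Toeplitz band matrix with lower bandwidth P-1 whose entries are nonnegative, i.e. (R)_{ij} = r_{i-j} ≥ 0 for 0 ≤ i-j < P and 0 otherwise, and assume P ≥ 2, r_0 > 0, and r_1 > 0. Define the row-normalized matrix R_N := diag(R·1)^{-1} R, where 1 is the all-ones vector (so each row of R_N sums to 1). Then R_N^k converges entrywise, as k → ∞, to the rank-one matrix 1·e_0^T, i.e. every row of R_N^k converges to the standard basis vector e_0^T = (1, 0, …, 0). -/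
open Filter

lemma scalar_rec_tendsto (d L : ℝ) (hd0 : 0 ≤ d) (hd1 : d < 1)
    (x c : ℕ → ℝ) (hrec : ∀ k, x (k + 1) = d * x k + c k)
    (hc : Tendsto c atTop (nhds ((1 - d) * L))) :
    Tendsto x atTop (nhds L) := by
  set y : ℕ → ℝ := fun k => x k - L with hy
  set e : ℕ → ℝ := fun k => c k - (1 - d) * L with he
  have hyrec : ∀ k, y (k + 1) = d * y k + e k := by
    intro k
    simp only [hy, he, hrec k]
    ring
  have he0 : Tendsto e atTop (nhds 0) := by
    have := hc.sub_const ((1 - d) * L)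
    simpa using this
  have hy0 : Tendsto y atTop (nhds 0) := by
    rw [Metric.tendsto_atTop]
    intro ε hε
    have hd1' : 0 < 1 - d := by linarith
    have hε' : 0 < ε * (1 - d) / 2 := by positivity
    rw [Metric.tendsto_atTop] at he0
    obtain ⟨N, hN⟩ := he0 (ε * (1 - d) / 2) hε'
    have hNb : ∀ k ≥ N, |e k| ≤ ε * (1 - d) / 2 := by
      intro k hk
      have := hN k hk
      rw [Real.dist_eq, sub_zero] at this
      linarith [this]
    have key : ∀ m : ℕ, |y (N + m)| ≤ d ^ m * |y N| + ε / 2 := by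
      intro m
      induction m with
      | zero => simp; positivity
      | succ m ih =>
        have h1 : |y (N + (m + 1))| ≤ d * |y (N + m)| + |e (N + m)| := by
          have : y (N + (m + 1)) = d * y (N + m) + e (N + m) := by
            rw [← hyrec (N + m)]; ring_nf
          rw [this]
          calc |d * y (N + m) + e (N + m)| ≤ |d * y (N + m)| + |e (N + m)| := abs_add_le _ _
            _ = d * |y (N + m)| + |e (N + m)| := by rw [abs_mul, abs_of_nonneg hd0]
        have h2 : |e (N + m)| ≤ ε * (1 - d) / 2 := hNb _ (Nat.le_add_right N m)
        have h3 : d * |y (N + m)| ≤ d * (d ^ m * |y N| + ε / 2) :=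
          mul_le_mul_of_nonneg_left ih hd0
        calc |y (N + (m + 1))| ≤ d * (d ^ m * |y N| + ε / 2) + ε * (1 - d) / 2 := by linarith
          _ = d ^ (m + 1) * |y N| + (d * ε / 2 + ε * (1 - d) / 2) := by ring
          _ ≤ d ^ (m + 1) * |y N| + ε / 2 := by nlinarith
    have hpow : Tendsto (fun m : ℕ => d ^ m * |y N|) atTop (nhds 0) := by
      have := (tendsto_pow_atTop_nhds_zero_of_lt_one hd0 hd1).mul_const (|y N|)
      simpa using this
    rw [Metric.tendsto_atTop] at hpow
    obtain ⟨M, hM⟩ := hpow (ε / 2) (by positivity)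
    refine ⟨N + M, fun k hk => ?_⟩
    have hm : N + (k - N) = k := by omega
    have h1 := key (k - N)
    rw [hm] at h1
    have h2 := hM (k - N) (by omega)
    rw [Real.dist_eq, sub_zero] at h2
    have h3 : d ^ (k - N) * |y N| ≤ abs (d ^ (k - N) * |y N|) := le_abs_self _
    rw [Real.dist_eq, sub_zero]
    calc |y k| ≤ d ^ (k - N) * |y N| + ε / 2 := h1
      _ < ε / 2 + ε / 2 := by linarith
      _ = ε := by ring
  have hconv : Tendsto (fun k => y k + L) atTop (nhds (0 + L)) := hy0.add_const L
  have hx : x = fun k => y k + L := funext fun k => by simp [hy]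
  rw [hx]
  simpa using hconv





/-- Let `R` be a nonnegative lower-triangular Toeplitz band matrix with
lower bandwidth `P - 1`, `P ≥ 2`, `r 0 > 0` and `r 1 > 0`, and let `RN` be its
row-normalization `diag(R·1)⁻¹ R` (i.e. every entry is divided by its row sum).  Then the
powers `RN ^ k` converge entrywise, as `k → ∞`, to the rank-one matrix `1 · e₀ᵀ`: every row
converges to the first standard basis vector. -/
theorem rowNormalized_toeplitz_powers_tendsto
    (T P : ℕ) (hP : 2 ≤ P) (r : ℕ → ℝ)
    (hr : ∀ k < P, 0 ≤ r k) (hr0 : 0 < r 0) (hr1 : 0 < r 1)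
    (R RN : Matrix (Fin T) (Fin T) ℝ)
    (hR : ∀ i j : Fin T,
      R i j = if j.val ≤ i.val ∧ i.val - j.val < P then r (i.val - j.val) else 0)
    (hRN : ∀ i j : Fin T, RN i j = R i j / ∑ k, R i k) :
    ∀ i j : Fin T,
      Tendsto (fun k : ℕ => (RN ^ k) i j) atTop (nhds (if j.val = 0 then 1 else 0)) := by
  -- nonnegativity of R
  have hRnn : ∀ i j : Fin T, 0 ≤ R i j := by
    intro i j
    rw [hR]
    split
    · exact hr _ (by omega)
    · exact le_refl 0
  have hRdiag : ∀ i : Fin T, R i i = r 0 := by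
    intro i
    rw [hR]
    simp only [le_refl, Nat.sub_self, true_and]
    rw [if_pos (by omega)]
  -- positive row sums
  have hS : ∀ i : Fin T, 0 < ∑ k, R i k := by
    intro i
    have : R i i ≤ ∑ k, R i k :=
      Finset.single_le_sum (fun k _ => hRnn i k) (Finset.mem_univ i)
    rw [hRdiag] at this
    linarith
  have hRNnn : ∀ i j : Fin T, 0 ≤ RN i j := fun i j => by
    rw [hRN]; exact div_nonneg (hRnn i j) (hS i).le
  have hRNrow : ∀ i : Fin T, ∑ j, RN i j = 1 := by
    intro i
    have h1 : ∑ j, RN i j = ∑ j, R i j / ∑ k, R i k :=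
      Finset.sum_congr rfl fun j _ => hRN i j
    rw [h1, ← Finset.sum_div, div_self (hS i).ne']
  have hRNtri : ∀ i j : Fin T, i.val < j.val → RN i j = 0 := by
    intro i j hij
    rw [hRN, hR, if_neg (by omega), zero_div]
  -- main claim by strong induction on i.val
  suffices H : ∀ n : ℕ, ∀ i : Fin T, i.val = n → ∀ j : Fin T,
      Tendsto (fun k : ℕ => (RN ^ k) i j) atTop (nhds (if j.val = 0 then 1 else 0)) by
    exact fun i j => H i.val i rfl j
  intro n
  induction n using Nat.strong_induction_on with
  | _ n IH =>
    intro i hi j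
    rcases Nat.eq_zero_or_pos n with hn0 | hnpos
    · -- base case: i.val = 0, row is constant e₀
      subst hn0
      have hRrow0 : ∀ m : Fin T, R i m = if m = i then r 0 else 0 := by
        intro m
        by_cases hm : m = i
        · rw [hm, hRdiag, if_pos rfl]
        · rw [hR, if_neg, if_neg hm]
          intro ⟨h1, _⟩
          exact hm (Fin.ext (by omega))
      have hSrow0 : ∑ k, R i k = r 0 := by
        rw [Finset.sum_congr rfl fun m _ => hRrow0 m]
        simp
      have hRN0 : ∀ m : Fin T, RN i m = if m = i then 1 else 0 := by
        intro m
        rw [hRN, hSrow0, hRrow0]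
        split
        · exact div_self hr0.ne'
        · exact zero_div _
      have hconst : ∀ k : ℕ, (RN ^ k) i j = if j.val = 0 then 1 else 0 := by
        intro k
        induction k with
        | zero =>
          simp only [pow_zero, Matrix.one_apply]
          by_cases hj : j.val = 0
          · rw [if_pos (Fin.ext (by omega) : i = j), if_pos hj]
          · rw [if_neg (fun (h : i = j) => hj (h ▸ hi)), if_neg hj]
        | succ k ihk =>
          rw [pow_succ', Matrix.mul_apply]
          rw [Finset.sum_eq_single i]
          · rw [hRN0, if_pos rfl, one_mul, ihk]
          · intro m _ hm
            rw [hRN0, if_neg hm, zero_mul]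
          · intro h; exact absurd (Finset.mem_univ i) h
      have heq : (fun k : ℕ => (RN ^ k) i j) = fun _ => if j.val = 0 then 1 else 0 :=
        funext hconst
      rw [heq]
      exact tendsto_const_nhds
    · -- inductive case: i.val = n ≥ 1
      set L : ℝ := if j.val = 0 then 1 else 0 with hL
      set d : ℝ := RN i i with hd
      have hiT : n < T := hi ▸ i.isLt
      have hpredT : n - 1 < T := by omega
      set p : Fin T := ⟨n - 1, hpredT⟩ with hp
      have hpne : p ≠ i := by
        intro h
        have := congrArg Fin.val h
        simp [hp, hi] at this
        omega
      have hRNp : 0 < RN i p := by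
        rw [hRN]
        apply div_pos _ (hS i)
        rw [hR, if_pos]
        · have : i.val - p.val = 1 := by simp [hp, hi]; omega
          rw [this]; exact hr1
        · constructor
          · simp [hp, hi]
          · simp [hp, hi]; omega
      have hd0 : 0 ≤ d := hRNnn i i
      have hd1 : d < 1 := by
        have hsub : d + RN i p ≤ ∑ m, RN i m := by
          have : ({i, p} : Finset (Fin T)) ⊆ Finset.univ := Finset.subset_univ _
          calc d + RN i p = ∑ m ∈ ({i, p} : Finset (Fin T)), RN i m := by
                rw [Finset.sum_pair (Ne.symm hpne)]
            _ ≤ ∑ m, RN i m :=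
                Finset.sum_le_sum_of_subset_of_nonneg this fun m _ _ => hRNnn i m
        rw [hRNrow] at hsub
        linarith
      -- recurrence
      set c : ℕ → ℝ := fun k => ∑ m ∈ Finset.univ.erase i, RN i m * (RN ^ k) m j with hc
      have hrec : ∀ k : ℕ, (RN ^ (k + 1)) i j = d * (RN ^ k) i j + c k := by
        intro k
        rw [pow_succ', Matrix.mul_apply]
        rw [← Finset.add_sum_erase _ _ (Finset.mem_univ i)]
      have hctend : Tendsto c atTop (nhds ((1 - d) * L)) := by
        have hterm : ∀ m ∈ Finset.univ.erase i,
            Tendsto (fun k : ℕ => RN i m * (RN ^ k) m j) atTop (nhds (RN i m * L)) := by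
          intro m hm
          have hmne : m ≠ i := Finset.ne_of_mem_erase hm
          rcases lt_trichotomy m.val i.val with hlt | heq | hgt
          · exact (IH m.val (by omega) m rfl j).const_mul (RN i m)
          · exact absurd (Fin.ext heq) hmne
          · have hz : RN i m = 0 := hRNtri i m hgt
            rw [hz]
            simp only [zero_mul]
            exact tendsto_const_nhds
        have := tendsto_finset_sum (Finset.univ.erase i) hterm
        have hsum : ∑ m ∈ Finset.univ.erase i, RN i m * L = (1 - d) * L := by
          rw [← Finset.sum_mul]
          congr 1
          rw [Finset.sum_erase_eq_sub (Finset.mem_univ i), hRNrow]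
        rw [hsum] at this
        exact this
      exact scalar_rec_tendsto d L hd0 hd1 _ c hrec hctend
end

section
/- For l = 1,…,L, let R_D^(l) ∈ {0,1}^{T×T} be the dilated-convolution temporal topology matrix with kernel size P ≥ 2 and dilation rate P^{l-1}, defined by (R_D^(l))_{ij} = 1 if and only if i - j = k·P^{l-1} for some integer k with 0 ≤ k < P (and 0 otherwise), with indices in {0,…,T-1}. Then the product Π_{l=1}^{L} R_D^(l) is the binary lower-triangular band matrix of bandwidth P^L - 1: its (i,j) entry equals 1 if 0 ≤ i - j < P^L and 0 otherwise. In particular, (Π_{l=1}^{L} R_D^(l))_{p,0} = 1 for every p with 0 ≤ p < P^L (and p ≤ T-1), so influence is distributed exactly uniformly over all time steps in the receptive field. -/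
lemma band_step (T P n : ℕ) (hP : 2 ≤ P)
    (A B : Matrix (Fin T) (Fin T) ℝ)
    (hA : ∀ i j : Fin T, A i j = if j.val ≤ i.val ∧ i.val - j.val < P ^ n then 1 else 0)
    (hB : ∀ i j : Fin T, B i j =
      if j.val ≤ i.val ∧ ∃ k < P, i.val - j.val = k * P ^ n then 1 else 0) :
    ∀ i j : Fin T, (A * B) i j =
      if j.val ≤ i.val ∧ i.val - j.val < P ^ (n + 1) then 1 else 0 := by
  intro i j
  have hQ : 0 < P ^ n := pow_pos (by omega) n
  rw [Matrix.mul_apply]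
  by_cases hc : j.val ≤ i.val ∧ i.val - j.val < P ^ (n + 1)
  · rw [if_pos hc]
    obtain ⟨hji, hlt⟩ := hc
    set Q := P ^ n with hQdef
    set k := (i.val - j.val) / Q with hk
    set r := (i.val - j.val) % Q with hr
    have hdm : k * Q + r = i.val - j.val := Nat.div_add_mod' _ _
    have hrQ : r < Q := Nat.mod_lt _ hQ
    have hkP : k < P := by
      rw [hk, Nat.div_lt_iff_lt_mul hQ]
      calc i.val - j.val < P ^ (n + 1) := hlt
        _ = P * Q := by rw [hQdef]; ring
    have hDle : k * Q ≤ i.val - j.val := by omega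
    have hm0T : j.val + k * Q < T := by
      have : j.val + k * Q ≤ i.val := by omega
      exact lt_of_le_of_lt this i.isLt
    calc ∑ m : Fin T, A i m * B m j
        = A i ⟨j.val + k * Q, hm0T⟩ * B ⟨j.val + k * Q, hm0T⟩ j := by
          apply Finset.sum_eq_single_of_mem _ (Finset.mem_univ _)
          intro m _ hm
          rw [hA, hB]
          split_ifs with h1 h2
          · exfalso
            obtain ⟨hmi, him⟩ := h1
            obtain ⟨hjm, k', hk'P, hk'⟩ := h2
            have e : (i.val - m.val) + k' * Q = k * Q + r := by omega
            have e1 : ((i.val - m.val) + k' * Q) % Q = (i.val - m.val) % Q :=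
              Nat.add_mul_mod_self_right _ _ _
            have e2 : (k * Q + r) % Q = r % Q := by rw [add_comm]; exact Nat.add_mul_mod_self_right _ _ _
            have e3 : (i.val - m.val) % Q = i.val - m.val := Nat.mod_eq_of_lt him
            have e4 : r % Q = r := Nat.mod_eq_of_lt hrQ
            have e5 : i.val - m.val = r := by rw [← e3, ← e1, e, e2, e4]
            have e6 : k' * Q = k * Q := by omega
            have e7 : k' = k := Nat.eq_of_mul_eq_mul_right hQ e6
            exact hm (Fin.ext (by simp only []; omega))
          all_goals ring
      _ = 1 := by
          have c1 : ((⟨j.val + k * Q, hm0T⟩ : Fin T) : ℕ) ≤ i.val ∧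
              i.val - ((⟨j.val + k * Q, hm0T⟩ : Fin T) : ℕ) < Q := by
            constructor <;> simp <;> omega
          have c2 : j.val ≤ ((⟨j.val + k * Q, hm0T⟩ : Fin T) : ℕ) ∧
              ∃ k' < P, ((⟨j.val + k * Q, hm0T⟩ : Fin T) : ℕ) - j.val = k' * Q := by
            exact ⟨by simp, k, hkP, by simp⟩
          rw [hA, hB, if_pos c1, if_pos c2]
          norm_num
  · rw [if_neg hc]
    apply Finset.sum_eq_zero
    intro m _
    rw [hA, hB]
    split_ifs with h1 h2
    · exfalso
      obtain ⟨hmi, him⟩ := h1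
      obtain ⟨hjm, k', hk'P, hk'⟩ := h2
      apply hc
      set Q := P ^ n with hQdef
      constructor
      · omega
      · have h3 : k' * Q + Q ≤ P * Q := by
          have hk1 : k' + 1 ≤ P := hk'P
          calc k' * Q + Q = (k' + 1) * Q := by ring
            _ ≤ P * Q := Nat.mul_le_mul_right Q hk1
        have hE : P ^ (n + 1) = P * Q := by rw [hQdef]; ring
        omega
    all_goals ring



/-- Let `RD l` (for `l = 1, …, L`) be the dilated-convolution temporal
topology matrix with kernel size `P ≥ 2` and dilation rate `P ^ (l - 1)`:
`(RD l)_{ij} = 1` iff `i - j = k · P^(l-1)` for some `0 ≤ k < P`, and `0` otherwise.  Then the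
ordered product `RD 1 * RD 2 * ⋯ * RD L` is the binary lower-triangular band matrix of
bandwidth `P ^ L - 1`: its `(i, j)` entry is `1` if `0 ≤ i - j < P ^ L` and `0` otherwise.
In particular, its `(p, 0)` entry equals `1` for every `p < P ^ L`, so influence is
distributed exactly uniformly over all time steps in the receptive field. -/
theorem dilated_convolution_product
    (L T P : ℕ) (hT : 0 < T) (hP : 2 ≤ P)
    (RD : ℕ → Matrix (Fin T) (Fin T) ℝ)
    (hRD : ∀ l, 1 ≤ l → l ≤ L → ∀ i j : Fin T,
      RD l i j =
        if j.val ≤ i.val ∧ ∃ k < P, i.val - j.val = k * P ^ (l - 1) then 1 else 0) :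
    (∀ i j : Fin T,
      ((List.range L).map (fun l => RD (l + 1))).prod i j
        = if j.val ≤ i.val ∧ i.val - j.val < P ^ L then 1 else 0) ∧
    (∀ p : Fin T, p.val < P ^ L →
      ((List.range L).map (fun l => RD (l + 1))).prod p ⟨0, hT⟩ = 1) := by
  have key : ∀ n, n ≤ L → ∀ i j : Fin T,
      ((List.range n).map (fun l => RD (l + 1))).prod i j
        = if j.val ≤ i.val ∧ i.val - j.val < P ^ n then 1 else 0 := by
    intro n
    induction n with
    | zero =>
      intro _ i j
      simp only [List.range_zero, List.map_nil, List.prod_nil, Matrix.one_apply, pow_zero]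
      by_cases h : i = j
      · subst h; simp
      · rw [if_neg h, if_neg]
        rintro ⟨h1, h2⟩
        exact h (Fin.ext (by omega))
    | succ n ih =>
      intro hn
      have hB : ∀ i j : Fin T, RD (n + 1) i j =
          if j.val ≤ i.val ∧ ∃ k < P, i.val - j.val = k * P ^ n then 1 else 0 := by
        intro i j
        have := hRD (n + 1) (by omega) hn i j
        simpa using this
      have hstep := band_step T P n hP _ (RD (n + 1)) (ih (by omega)) hB
      intro i j
      rw [List.range_succ, List.map_append, List.prod_append, List.map_cons, List.map_nil,
        List.prod_cons, List.prod_nil, mul_one]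
      exact hstep i j
  refine ⟨key L le_rfl, fun p hp => ?_⟩
  rw [key L le_rfl p ⟨0, hT⟩, if_pos ⟨Nat.zero_le _, by simpa using hp⟩]
end
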